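/- Integral estimate for the radial derivative of Ã at small r: setting Ãᵣ(r,y) := −4 sin²(ry)/r³ + 2 y sin(2ry)/r², there exists a constant C > 0 such that for all r ∈ (0,1] and all v ≥ 0, ∫₀^v Ã(r,y)^{1/2} |Ãᵣ(r,y)| dy ≤ C r (v⁵ + v⁶). -/

import Mathlib

/-!
With `s = r y`, the two terms of `Ãᵣ` combine to `Ãᵣ(r,y) = 4 sin s (s cos s - sin s) / r³`. For
`s ≥ 0` the Taylor bounds `s - s³/6 ≤ sin s ≤ s` and `1 - s²/2 ≤ cos s ≤ 1` give
`|s cos s - sin s| ≤ s³/2`, so `|Ãᵣ(r,y)| ≤ 2 r y⁴`: the apparent `r⁻³` singularity cancels.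
Together with `Ã(r,y)^{1/2} ≤ (1 + 2y²)^{1/2} ≤ 1 + 2y`, integrating `2 r (y⁴ + 2 y⁵)` over
`[0, v]` gives the estimate with `C = 1`.
-/

open Real Set

/-- `Ã(r,y) = 1 + 2 sin²(ry) / r²`. -/
noncomputable def Atil (r y : ℝ) : ℝ := 1 + 2 * Real.sin (r * y) ^ 2 / r ^ 2

/-- `Ãᵣ(r,y)`, the partial derivative of `Ã(r,y)` with respect to `r` at fixed `y`. -/
noncomputable def AtilR (r y : ℝ) : ℝ :=
  -4 * Real.sin (r * y) ^ 2 / r ^ 3 + 2 * y * Real.sin (2 * r * y) / r ^ 2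

theorem abs_mul_cos_sub_sin_le {s : ℝ} (hs : 0 ≤ s) : |s * cos s - sin s| ≤ s ^ 3 / 2 := by
  have h₁ : 0 ≤ s - sin s := sub_nonneg.2 (sin_le hs)
  have h₂ : s - sin s ≤ s ^ 3 / 6 := by linarith [sin_ge_sub_cube hs]
  have h₃ : 0 ≤ 1 - cos s := sub_nonneg.2 (cos_le_one s)
  have h₄ : 1 - cos s ≤ s ^ 2 / 2 := by linarith [one_sub_sq_div_two_le_cos (x := s)]
  rw [abs_le]
  constructor <;> nlinarith [mul_le_mul_of_nonneg_left h₄ hs, mul_nonneg hs h₃]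

theorem AtilR_eq_sin_mul (r y : ℝ) :
    AtilR r y = 4 * sin (r * y) * (r * y * cos (r * y) - sin (r * y)) / r ^ 3 := by
  rcases eq_or_ne r 0 with rfl | hr
  · simp [AtilR]
  rw [AtilR, mul_assoc 2 r y, sin_two_mul]
  field_simp
  ring

theorem abs_AtilR_le {r y : ℝ} (hr : 0 < r) (hy : 0 ≤ y) : |AtilR r y| ≤ 2 * r * y ^ 4 := by
  have hs : 0 ≤ r * y := mul_nonneg hr.le hy
  have hsin : |sin (r * y)| ≤ r * y := (abs_sin_le_abs).trans (abs_of_nonneg hs).le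
  calc |AtilR r y|
      = 4 * |sin (r * y)| * |r * y * cos (r * y) - sin (r * y)| / r ^ 3 := by
        rw [AtilR_eq_sin_mul, abs_div, abs_mul, abs_mul,
          abs_of_pos (by positivity : (0:ℝ) < r ^ 3), abs_of_pos (four_pos : (0:ℝ) < 4)]
    _ ≤ 4 * (r * y) * ((r * y) ^ 3 / 2) / r ^ 3 := by
        gcongr
        exact abs_mul_cos_sub_sin_le hs
    _ = 2 * r * y ^ 4 := by field_simp; ring

theorem Atil_le (r y : ℝ) : Atil r y ≤ 1 + 2 * y ^ 2 := by
  rcases eq_or_ne r 0 with rfl | hr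
  · simp [Atil]; positivity
  have : sin (r * y) ^ 2 ≤ (r * y) ^ 2 := sin_sq_le_sq
  rw [Atil, add_le_add_iff_left, div_le_iff₀ (by positivity)]
  nlinarith

theorem Atil_rpow_half_le (r : ℝ) {y : ℝ} (hy : 0 ≤ y) : Atil r y ^ (1 / 2 : ℝ) ≤ 1 + 2 * y := by
  rw [← sqrt_eq_rpow, sqrt_le_left (by linarith)]
  nlinarith [Atil_le r y]

theorem continuous_Atil (r : ℝ) : Continuous (Atil r) := by
  unfold Atil; fun_prop

theorem continuous_AtilR (r : ℝ) : Continuous (AtilR r) := by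
  unfold AtilR; fun_prop

/-- Integral estimate for the radial derivative of `Ã` at small `r`. -/
theorem integral_estimate_AtilR :
    ∃ C : ℝ, 0 < C ∧
      ∀ r ∈ Set.Ioc (0:ℝ) 1, ∀ v : ℝ, 0 ≤ v →
        (∫ y in (0:ℝ)..v, (Atil r y) ^ ((1:ℝ)/2) * |AtilR r y|)
          ≤ C * r * (v ^ 5 + v ^ 6) := by
  refine ⟨1, one_pos, ?_⟩
  rintro r ⟨hr, -⟩ v hv
  have hbound : ∀ y ∈ Icc 0 v,
      Atil r y ^ (1 / 2 : ℝ) * |AtilR r y| ≤ 2 * r * (y ^ 4 + 2 * y ^ 5) :=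
    fun y hy => calc
      Atil r y ^ (1 / 2 : ℝ) * |AtilR r y| ≤ (1 + 2 * y) * (2 * r * y ^ 4) :=
        mul_le_mul (Atil_rpow_half_le r hy.1) (abs_AtilR_le hr hy.1) (abs_nonneg _)
          (by linarith [hy.1])
      _ = 2 * r * (y ^ 4 + 2 * y ^ 5) := by ring
  have hcont : Continuous fun y => Atil r y ^ (1 / 2 : ℝ) * |AtilR r y| :=
    ((continuous_Atil r).rpow_const fun _ => Or.inr one_half_pos.le).mul (continuous_AtilR r).abs
  calc (∫ y in (0:ℝ)..v, Atil r y ^ (1 / 2 : ℝ) * |AtilR r y|)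
      ≤ ∫ y in (0:ℝ)..v, 2 * r * (y ^ 4 + 2 * y ^ 5) :=
        intervalIntegral.integral_mono_on hv (hcont.intervalIntegrable _ _)
          (Continuous.intervalIntegrable (by fun_prop) _ _) hbound
    _ = 2 * r * (v ^ 5 / 5 + v ^ 6 / 3) := by
        simp only [intervalIntegral.integral_const_mul, intervalIntegral.integral_add,
          intervalIntegral.intervalIntegrable_pow, IntervalIntegrable.const_mul, integral_pow]
        ring
    _ ≤ 1 * r * (v ^ 5 + v ^ 6) := by
        nlinarith [pow_nonneg hv 5, pow_nonneg hv 6]
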